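/- arXiv:2105.14316 — 2 statements merged into one kernel-verified Lean document; each statement's English description precedes it below -/
import Mathlib

section
/- For every n ≥ 3, the class of algebras with an n-ary near-unanimity operation (an n-ary operation f satisfying f(y,x,…,x) = f(x,y,x,…,x) = ⋯ = f(x,…,x,y) = x) has the strong amalgamation property. -/
/-!
Glue the two operations into a partial operation on `A ∪ B`: use `fA` on tuples from `A` and `fB`
on tuples from `B`; on tuples from `A ∩ B = C` the two agree, since both extend `fC`. Then overrule
it on every tuple that is constant up to one coordinate by that constant. For arity at least three
the constant of such a tuple is unique, so this is well defined and makes the result a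
near-unanimity operation, and it does not change the values of `fA` and `fB`, which are
near-unanimity operations themselves.
-/

open Function

section NearUnanimity

variable {ι α β : Type*}

def IsNearConst (t : ι → α) (x : α) : Prop :=
  ∃ i, ∀ k, k ≠ i → t k = x

def IsNearUnanimity (f : (ι → α) → α) : Prop :=
  ∀ t x, IsNearConst t x → f t = x

theorem isNearConst_update [DecidableEq ι] (x y : α) (i : ι) :
    IsNearConst (update (fun _ => x) i y) x :=
  ⟨i, fun _ hk => update_of_ne hk _ _⟩

theorem IsNearConst.unique (hι : 3 ≤ Cardinal.mk ι) {t : ι → α} {x x' : α}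
    (hx : IsNearConst t x) (hx' : IsNearConst t x') : x = x' := by
  obtain ⟨i, hi⟩ := hx
  obtain ⟨i', hi'⟩ := hx'
  obtain ⟨k, hki, hki'⟩ := Cardinal.exists_ne_ne_of_three_le hι i i'
  rw [← hi k hki, hi' k hki']

theorem isNearUnanimity_of_update [DecidableEq ι] {f : (ι → α) → α}
    (hf : ∀ (x y : α) (i : ι), f (update (fun _ => x) i y) = x) : IsNearUnanimity f := by
  rintro t x ⟨i, hi⟩
  have : t = update (fun _ => x) i (t i) := by
    funext k
    rcases eq_or_ne k i with rfl | hk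
    · simp
    · rw [update_of_ne hk, hi k hk]
  rw [this, hf]

theorem IsNearUnanimity.apply_comp_eq [Nontrivial ι] {f : (ι → α) → α} (hf : IsNearUnanimity f)
    {g : (ι → β) → β} {e : α → β} (he : Injective e) {s : ι → α}
    (hfg : g (e ∘ s) = e (f s)) {x : β} (hx : IsNearConst (e ∘ s) x) : g (e ∘ s) = x := by
  obtain ⟨i, hi⟩ := hx
  obtain ⟨j, hj⟩ := exists_ne i
  have hs : IsNearConst s (s j) := ⟨i, fun k hk => he ((hi k hk).trans (hi j hj).symm)⟩
  rw [hfg, hf s _ hs]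
  exact hi j hj

noncomputable def nearUnanimityCompletion (g : (ι → α) → α) (t : ι → α) : α :=
  open Classical in
  if h : ∃ x, IsNearConst t x then h.choose else g t

theorem isNearUnanimity_nearUnanimityCompletion (hι : 3 ≤ Cardinal.mk ι) (g : (ι → α) → α) :
    IsNearUnanimity (nearUnanimityCompletion g) := by
  intro t x hx
  have h : ∃ x', IsNearConst t x' := ⟨x, hx⟩
  rw [nearUnanimityCompletion, dif_pos h]
  exact h.choose_spec.unique hι hx

theorem nearUnanimityCompletion_eq {g : (ι → α) → α} {t : ι → α}
    (hg : ∀ x, IsNearConst t x → g t = x) : nearUnanimityCompletion g t = g t := by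
  rw [nearUnanimityCompletion]
  split_ifs with h
  · exact (hg _ h.choose_spec).symm
  · rfl

end NearUnanimity

section Union

variable {ι U : Type*} {A B : Set U}

noncomputable def unionOp [Nonempty ι] (fA : (ι → A) → A) (fB : (ι → B) → B)
    (t : ι → ↥(A ∪ B)) : ↥(A ∪ B) :=
  open Classical in
  if ha : ∀ k, (t k : U) ∈ A then ⟨fA fun k => ⟨t k, ha k⟩, Or.inl (fA _).2⟩
  else if hb : ∀ k, (t k : U) ∈ B then ⟨fB fun k => ⟨t k, hb k⟩, Or.inr (fB _).2⟩
  else t (Classical.arbitrary ι)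

variable [Nonempty ι] (fA : (ι → A) → A) (fB : (ι → B) → B)

theorem unionOp_inclusion_left (t : ι → A) :
    unionOp fA fB (Set.inclusion Set.subset_union_left ∘ t) =
      Set.inclusion Set.subset_union_left (fA t) :=
  dif_pos fun k => (t k).2

theorem unionOp_inclusion_right
    (hAB : ∀ (t : ι → U) (ha : ∀ k, t k ∈ A) (hb : ∀ k, t k ∈ B),
      (fA fun k => ⟨t k, ha k⟩ : U) = fB fun k => ⟨t k, hb k⟩)
    (t : ι → B) :
    unionOp fA fB (Set.inclusion Set.subset_union_right ∘ t) =
      Set.inclusion Set.subset_union_right (fB t) := by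
  rw [unionOp]
  split_ifs with ha hb
  · exact Subtype.ext (hAB _ ha fun k => (t k).2)
  · rfl
  · exact absurd (fun k => (t k).2) hb

end Union

theorem stmt_6_general (n : ℕ) (hn : 3 ≤ n) (U : Type) (A B C : Set U)
    (fA : (Fin n → ↥A) → ↥A) (fB : (Fin n → ↥B) → ↥B) (fC : (Fin n → ↥C) → ↥C)
    (hA : ∀ (x y : ↥A) (i : Fin n), fA (Function.update (fun _ => x) i y) = x)
    (hB : ∀ (x y : ↥B) (i : Fin n), fB (Function.update (fun _ => x) i y) = x)
    (hCA : C ⊆ A) (hCB : C ⊆ B) (hAB : A ∩ B = C)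
    (hextA : ∀ t : Fin n → ↥C, ((fC t : U)) = (fA (fun k => ⟨t k, hCA (t k).2⟩) : U))
    (hextB : ∀ t : Fin n → ↥C, ((fC t : U)) = (fB (fun k => ⟨t k, hCB (t k).2⟩) : U)) :
    ∃ fD : (Fin n → ↥(A ∪ B)) → ↥(A ∪ B),
      (∀ (x y : ↥(A ∪ B)) (i : Fin n), fD (Function.update (fun _ => x) i y) = x) ∧
      (∀ t : Fin n → ↥A,
        ((fA t : U)) = (fD (fun k => ⟨t k, Set.mem_union_left B (t k).2⟩) : U)) ∧
      (∀ t : Fin n → ↥B,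
        ((fB t : U)) = (fD (fun k => ⟨t k, Set.mem_union_right A (t k).2⟩) : U)) := by
  have hcard : 3 ≤ Cardinal.mk (Fin n) := by
    rw [Cardinal.mk_fin]
    exact_mod_cast hn
  have : Nontrivial (Fin n) := Fin.nontrivial_iff_two_le.2 (by omega)
  have hagree : ∀ (t : Fin n → U) (ha : ∀ k, t k ∈ A) (hb : ∀ k, t k ∈ B),
      (fA fun k => ⟨t k, ha k⟩ : U) = fB fun k => ⟨t k, hb k⟩ := fun t ha hb =>
    have hc : ∀ k, t k ∈ C := fun k => hAB ▸ ⟨ha k, hb k⟩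
    (hextA fun k => ⟨t k, hc k⟩).symm.trans (hextB fun k => ⟨t k, hc k⟩)
  refine ⟨nearUnanimityCompletion (unionOp fA fB), fun x y i =>
    isNearUnanimity_nearUnanimityCompletion hcard _ _ x (isNearConst_update x y i),
    fun t => ?_, fun t => ?_⟩
  · have h := unionOp_inclusion_left fA fB t
    exact congrArg Subtype.val (.symm <| (nearUnanimityCompletion_eq
      fun _ => (isNearUnanimity_of_update hA).apply_comp_eq (Set.inclusion_injective _) h).trans h)
  · have h := unionOp_inclusion_right fA fB hagree t
    exact congrArg Subtype.val (.symm <| (nearUnanimityCompletion_eq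
      fun _ => (isNearUnanimity_of_update hB).apply_comp_eq (Set.inclusion_injective _) h).trans h)

/-- For every `n ≥ 3`, the class of algebras with an `n`-ary near-unanimity
operation has the strong amalgamation property. -/
theorem stmt_6 (n : ℕ) (hn : 3 ≤ n) (U : Type) (A B C : Set U) (hCne : C.Nonempty)
    (fA : (Fin n → ↥A) → ↥A) (fB : (Fin n → ↥B) → ↥B) (fC : (Fin n → ↥C) → ↥C)
    (hA : ∀ (x y : ↥A) (i : Fin n), fA (Function.update (fun _ => x) i y) = x)
    (hB : ∀ (x y : ↥B) (i : Fin n), fB (Function.update (fun _ => x) i y) = x)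
    (hC : ∀ (x y : ↥C) (i : Fin n), fC (Function.update (fun _ => x) i y) = x)
    (hCA : C ⊆ A) (hCB : C ⊆ B) (hAB : A ∩ B = C)
    (hextA : ∀ t : Fin n → ↥C, ((fC t : U)) = (fA (fun k => ⟨t k, hCA (t k).2⟩) : U))
    (hextB : ∀ t : Fin n → ↥C, ((fC t : U)) = (fB (fun k => ⟨t k, hCB (t k).2⟩) : U)) :
    ∃ fD : (Fin n → ↥(A ∪ B)) → ↥(A ∪ B),
      (∀ (x y : ↥(A ∪ B)) (i : Fin n), fD (Function.update (fun _ => x) i y) = x) ∧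
      (∀ t : Fin n → ↥A,
        ((fA t : U)) = (fD (fun k => ⟨t k, Set.mem_union_left B (t k).2⟩) : U)) ∧
      (∀ t : Fin n → ↥B,
        ((fB t : U)) = (fD (fun k => ⟨t k, Set.mem_union_right A (t k).2⟩) : U)) :=
  stmt_6_general n hn U A B C fA fB fC hA hB hCA hCB hAB hextA hextB
end

section
/- The class of algebras with ternary operations d₀, d₁, d₂ satisfying Jónsson's equations for congruence distributivity with n = 2 (d₀(x,y,z) = x, d₂(x,y,z) = z, dᵢ(x,y,x) = x for all i, d₀(x,y,y) = d₁(x,y,y), d₁(x,x,y) = d₂(x,x,y)) has the strong amalgamation property. -/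
/-!
Since `d₀` and `d₂` are forced to be the outer projections, Jónsson's equations for `n = 2` say
exactly that `d₁` is a Pixley operation: `p x y y = x = p x y x` and `p x x y = y`. To amalgamate,
interpret `d₁` on `A ∪ B` as the operation of `A` on triples from `A`, as that of `B` on triples
from `B` (consistent because both restrict to `C = A ∩ B`), and as the discriminator elsewhere.
Each Pixley identity involves only two elements `x, y`, and a triple over `{x, y}` lies in `A`
whenever `x, y` do, and likewise for `B`; so every instance of an identity is evaluated entirely
by the operation of `A`, entirely by that of `B`, or entirely by the discriminator, all of which
are Pixley.
-/

/-- A triple of ternary operations. -/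
structure Jon (M : Type*) where
  d0 : M → M → M → M
  d1 : M → M → M → M
  d2 : M → M → M → M

/-- Jónsson's equations for congruence distributivity with `n = 2`. -/
def Jon.Eqs {M : Type*} (J : Jon M) : Prop :=
  (∀ x y z, J.d0 x y z = x) ∧ (∀ x y z, J.d2 x y z = z) ∧
  (∀ x y, J.d0 x y x = x) ∧ (∀ x y, J.d1 x y x = x) ∧ (∀ x y, J.d2 x y x = x) ∧
  (∀ x y, J.d0 x y y = J.d1 x y y) ∧ (∀ x y, J.d1 x x y = J.d2 x x y)

/-- The operations of a Jónsson algebra on `S` are the restrictions of those on `T`. -/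
def JonExt {U : Type*} {S T : Set U} (h : S ⊆ T) (JS : Jon ↥S) (JT : Jon ↥T) : Prop :=
  ∀ x y z : ↥S,
    ((JS.d0 x y z : U)) = (JT.d0 ⟨x, h x.2⟩ ⟨y, h y.2⟩ ⟨z, h z.2⟩ : U) ∧
    ((JS.d1 x y z : U)) = (JT.d1 ⟨x, h x.2⟩ ⟨y, h y.2⟩ ⟨z, h z.2⟩ : U) ∧
    ((JS.d2 x y z : U)) = (JT.d2 ⟨x, h x.2⟩ ⟨y, h y.2⟩ ⟨z, h z.2⟩ : U)

def IsPixley {M : Type*} (p : M → M → M → M) : Prop :=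
  (∀ x y, p x y y = x) ∧ (∀ x y, p x x y = y) ∧ (∀ x y, p x y x = x)

def discriminator {M : Type*} [DecidableEq M] (x y z : M) : M :=
  if x = y then z else x

theorem isPixley_discriminator {M : Type*} [DecidableEq M] :
    IsPixley (discriminator (M := M)) := by
  refine ⟨fun x y => ?_, fun x y => ?_, fun x y => ?_⟩ <;> unfold discriminator <;> grind

section Glue

variable {U : Type*} {A B : Set U}

open Classical in
noncomputable def glue (p : A → A → A → A) (q : B → B → B → B)
    (r : ↥(A ∪ B) → ↥(A ∪ B) → ↥(A ∪ B) → ↥(A ∪ B)) (x y z : ↥(A ∪ B)) : ↥(A ∪ B) :=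
  if h : x.1 ∈ A ∧ y.1 ∈ A ∧ z.1 ∈ A then
    Set.inclusion Set.subset_union_left (p ⟨x, h.1⟩ ⟨y, h.2.1⟩ ⟨z, h.2.2⟩)
  else if h : x.1 ∈ B ∧ y.1 ∈ B ∧ z.1 ∈ B then
    Set.inclusion Set.subset_union_right (q ⟨x, h.1⟩ ⟨y, h.2.1⟩ ⟨z, h.2.2⟩)
  else r x y z

variable {p : A → A → A → A} {q : B → B → B → B}
  {r : ↥(A ∪ B) → ↥(A ∪ B) → ↥(A ∪ B) → ↥(A ∪ B)}

theorem glue_inclusion_left (x y z : A) :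
    glue p q r (Set.inclusion Set.subset_union_left x) (Set.inclusion Set.subset_union_left y)
      (Set.inclusion Set.subset_union_left z) = Set.inclusion Set.subset_union_left (p x y z) := by
  rw [glue, dif_pos ⟨x.2, y.2, z.2⟩]

theorem glue_inclusion_right
    (hpq : ∀ (x y z : A) (hx : x.1 ∈ B) (hy : y.1 ∈ B) (hz : z.1 ∈ B),
      (p x y z : U) = q ⟨x, hx⟩ ⟨y, hy⟩ ⟨z, hz⟩) (x y z : B) :
    glue p q r (Set.inclusion Set.subset_union_right x) (Set.inclusion Set.subset_union_right y)
      (Set.inclusion Set.subset_union_right z) =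
      Set.inclusion Set.subset_union_right (q x y z) := by
  unfold glue
  split_ifs with hA hB
  · exact Subtype.ext (hpq ⟨x, hA.1⟩ ⟨y, hA.2.1⟩ ⟨z, hA.2.2⟩ x.2 y.2 z.2)
  · rfl
  · exact absurd ⟨x.2, y.2, z.2⟩ hB

theorem IsPixley.glue (hp : IsPixley p) (hq : IsPixley q) (hr : IsPixley r) :
    IsPixley (glue p q r) := by
  obtain ⟨hp₁, hp₂, hp₃⟩ := hp
  obtain ⟨hq₁, hq₂, hq₃⟩ := hq
  refine ⟨fun x y => ?_, fun x y => ?_, fun x y => ?_⟩ <;>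
    unfold _root_.glue <;> split_ifs
  all_goals simp only [hp₁, hp₂, hp₃, hq₁, hq₂, hq₃, hr.1, hr.2.1, hr.2.2, Set.inclusion]

end Glue

namespace Jon

variable {M : Type*}

def ofPixley (p : M → M → M → M) : Jon M :=
  ⟨fun x _ _ => x, p, fun _ _ z => z⟩

theorem eqs_ofPixley {p : M → M → M → M} (hp : IsPixley p) : (ofPixley p).Eqs :=
  ⟨fun _ _ _ => rfl, fun _ _ _ => rfl, fun _ _ => rfl, hp.2.2, fun _ _ => rfl,
    fun x y => (hp.1 x y).symm, hp.2.1⟩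

theorem Eqs.isPixley {J : Jon M} (hJ : J.Eqs) : IsPixley J.d1 := by
  obtain ⟨hd₀, hd₂, -, hd₁, -, hd₀₁, hd₁₂⟩ := hJ
  exact ⟨fun x y => by rw [← hd₀₁, hd₀], fun x y => by rw [hd₁₂, hd₂], hd₁⟩

end Jon

section Ext

variable {U : Type*} {S T : Set U}

theorem jonExt_ofPixley {h : S ⊆ T} {J : Jon S} {p : T → T → T → T} (hJ : J.Eqs)
    (hp : ∀ x y z, p (Set.inclusion h x) (Set.inclusion h y) (Set.inclusion h z) =
      Set.inclusion h (J.d1 x y z)) :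
    JonExt h J (Jon.ofPixley p) := fun x y z =>
  ⟨by rw [hJ.1]; rfl, congrArg Subtype.val (hp x y z).symm, by rw [hJ.2.1]; rfl⟩

theorem JonExt.d1_agree {A B C : Set U} {hCA : C ⊆ A} {hCB : C ⊆ B} {JA : Jon A} {JB : Jon B}
    {JC : Jon C} (hA : JonExt hCA JC JA) (hB : JonExt hCB JC JB) (hAB : A ∩ B ⊆ C)
    (x y z : A) (hx : x.1 ∈ B) (hy : y.1 ∈ B) (hz : z.1 ∈ B) :
    (JA.d1 x y z : U) = JB.d1 ⟨x, hx⟩ ⟨y, hy⟩ ⟨z, hz⟩ := by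
  have hxC := hAB ⟨x.2, hx⟩
  have hyC := hAB ⟨y.2, hy⟩
  have hzC := hAB ⟨z.2, hz⟩
  exact (hA ⟨x, hxC⟩ ⟨y, hyC⟩ ⟨z, hzC⟩).2.1.symm.trans
    (hB ⟨x, hxC⟩ ⟨y, hyC⟩ ⟨z, hzC⟩).2.1

end Ext

theorem stmt_17_general {U : Type} (A B C : Set U)
    (JA : Jon ↥A) (JB : Jon ↥B) (JC : Jon ↥C)
    (hJA : JA.Eqs) (hJB : JB.Eqs)
    (hCA : C ⊆ A) (hCB : C ⊆ B) (hAB : A ∩ B = C)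
    (hextA : JonExt hCA JC JA) (hextB : JonExt hCB JC JB) :
    ∃ JD : Jon ↥(A ∪ B), JD.Eqs ∧
      JonExt (Set.subset_union_left : A ⊆ A ∪ B) JA JD ∧
      JonExt (Set.subset_union_right : B ⊆ A ∪ B) JB JD := by
  classical
  refine ⟨Jon.ofPixley (glue JA.d1 JB.d1 discriminator), ?_, ?_, ?_⟩
  · exact Jon.eqs_ofPixley (hJA.isPixley.glue hJB.isPixley isPixley_discriminator)
  · exact jonExt_ofPixley hJA glue_inclusion_left
  · exact jonExt_ofPixley hJB (glue_inclusion_right (hextA.d1_agree hextB hAB.subset))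

/-- The class of algebras with Jónsson operations `d₀, d₁, d₂` (the case `n = 2` of
Jónsson's condition for congruence distributivity) has the strong amalgamation
property. -/
theorem stmt_17 {U : Type} (A B C : Set U) (hCne : C.Nonempty)
    (JA : Jon ↥A) (JB : Jon ↥B) (JC : Jon ↥C)
    (hJA : JA.Eqs) (hJB : JB.Eqs) (hJC : JC.Eqs)
    (hCA : C ⊆ A) (hCB : C ⊆ B) (hAB : A ∩ B = C)
    (hextA : JonExt hCA JC JA) (hextB : JonExt hCB JC JB) :
    ∃ JD : Jon ↥(A ∪ B), JD.Eqs ∧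
      JonExt (Set.subset_union_left : A ⊆ A ∪ B) JA JD ∧
      JonExt (Set.subset_union_right : B ⊆ A ∪ B) JB JD :=
  stmt_17_general A B C JA JB JC hJA hJB hCA hCB hAB hextA hextB
end
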